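/- arXiv:2508.12122 — 4 statements merged into one kernel-verified Lean document; each statement's English description precedes it below -/
import Mathlib

section
/- Let d ≥ 2, let G be a closed fractal subgroup of Aut T_d, and let H be an open self-similar subgroup of G. Then H is itself fractal: for every vertex v of T_d one has π_v(H_v) = H, where H_v is the stabilizer of v in H. -/
open scoped Pointwise

namespace TreeDyn

/-- Vertices of the `d`-regular rooted tree: finite words over `{0,…,d-1}`,
with the empty word as root and children of `w` the words `w ++ [x]`. -/
abbrev Vertex (d : ℕ) := List (Fin d)

/-- A function on words is length-preserving and prefix-preserving. -/
def LP (d : ℕ) (f : Vertex d → Vertex d) : Prop :=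
  (∀ w : Vertex d, (f w).length = w.length) ∧
    ∀ v w : Vertex d, v <+: w → f v <+: f w

theorem LP.id' (d : ℕ) : LP d id := ⟨fun _ => rfl, fun _ _ h => h⟩

theorem LP.comp {d : ℕ} {f g : Vertex d → Vertex d} (hf : LP d f) (hg : LP d g) :
    LP d (f ∘ g) :=
  ⟨fun w => (hf.1 (g w)).trans (hg.1 w), fun v w h => hf.2 _ _ (hg.2 _ _ h)⟩

/-- The automorphism group of the rooted `d`-regular tree, realized as the subgroup of
permutations of the vertex set which fix the root and preserve the child relation
(equivalently: length- and prefix-preserving permutations). -/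
def treeAut (d : ℕ) : Subgroup (Equiv.Perm (Vertex d)) where
  carrier := {g | LP d ⇑g ∧ LP d ⇑g⁻¹}
  one_mem' := ⟨LP.id' d, by simpa using LP.id' d⟩
  mul_mem' := by
    rintro a b ⟨ha1, ha2⟩ ⟨hb1, hb2⟩
    refine ⟨?_, ?_⟩
    · simpa [Equiv.Perm.coe_mul] using ha1.comp hb1
    · rw [mul_inv_rev]
      simpa [Equiv.Perm.coe_mul] using hb2.comp ha2
  inv_mem' := by
    rintro a ⟨h1, h2⟩
    exact ⟨h2, by simpa using h1⟩

/-- `Aut T_d`, the automorphism group of the `d`-regular rooted tree. -/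
abbrev AutT (d : ℕ) := ↥(treeAut d)

namespace AutT

variable {d : ℕ}

/-- The underlying permutation of the vertices. -/
def toPerm (g : AutT d) : Equiv.Perm (Vertex d) := g.1

theorem toPerm_mul (g h : AutT d) : (g * h).toPerm = g.toPerm * h.toPerm := rfl

theorem toPerm_inv (g : AutT d) : (g⁻¹).toPerm = (g.toPerm)⁻¹ := rfl

theorem toPerm_one : (1 : AutT d).toPerm = 1 := rfl

theorem length_apply (g : AutT d) (w : Vertex d) : (g.toPerm w).length = w.length :=
  g.2.1.1 w

theorem prefix_apply (g : AutT d) {v w : Vertex d} (h : v <+: w) :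
    g.toPerm v <+: g.toPerm w :=
  g.2.1.2 v w h

theorem take_apply (g : AutT d) (v u : Vertex d) :
    (g.toPerm (v ++ u)).take v.length = g.toPerm v := by
  have h : g.toPerm v <+: g.toPerm (v ++ u) := g.prefix_apply (List.prefix_append v u)
  have h2 := List.prefix_iff_eq_take.mp h
  rw [length_apply] at h2
  exact h2.symm

theorem apply_append (g : AutT d) (v u : Vertex d) :
    g.toPerm (v ++ u) = g.toPerm v ++ (g.toPerm (v ++ u)).drop v.length := by
  conv_lhs => rw [← List.take_append_drop v.length (g.toPerm (v ++ u))]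
  rw [take_apply]

/-- The section function: the action of `g` on the subtree over `v`, transported
to the whole tree. -/
def secFun (g : AutT d) (v : Vertex d) : Vertex d → Vertex d :=
  fun u => (g.toPerm (v ++ u)).drop v.length

theorem secFun_spec (g : AutT d) (v u : Vertex d) :
    g.toPerm (v ++ u) = g.toPerm v ++ secFun g v u :=
  apply_append g v u

theorem secFun_left (g : AutT d) (v u : Vertex d) :
    secFun g⁻¹ (g.toPerm v) (secFun g v u) = u := by
  have h1 := secFun_spec g⁻¹ (g.toPerm v) (secFun g v u)
  rw [← secFun_spec g v u] at h1
  rw [toPerm_inv] at h1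
  simp only [Equiv.Perm.inv_def, Equiv.symm_apply_apply] at h1
  exact (List.append_cancel_left h1).symm

theorem LP_secFun (g : AutT d) (v : Vertex d) : LP d (secFun g v) := by
  constructor
  · intro w
    simp only [secFun, List.length_drop, length_apply, List.length_append]
    omega
  · intro u1 u2 h
    have h2 : g.toPerm (v ++ u1) <+: g.toPerm (v ++ u2) := by
      refine g.prefix_apply ?_
      obtain ⟨t, ht⟩ := h
      exact ⟨t, by rw [List.append_assoc, ht]⟩
    exact h2.drop v.length

/-- The section of the tree automorphism `g` at the vertex `v`: the automorphism `g|_v` with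
`g (v ++ u) = g v ++ g|_v u`. -/
def sec (g : AutT d) (v : Vertex d) : AutT d :=
  ⟨{ toFun := secFun g v
     invFun := secFun g⁻¹ (g.toPerm v)
     left_inv := secFun_left g v
     right_inv := by
       intro u
       have h := secFun_left g⁻¹ (g.toPerm v) u
       rw [inv_inv] at h
       rw [toPerm_inv] at h
       simp only [Equiv.Perm.inv_def, Equiv.symm_apply_apply] at h
       exact h },
   by
     refine ⟨LP_secFun g v, ?_⟩
     have : ⇑(({ toFun := secFun g v
                 invFun := secFun g⁻¹ (g.toPerm v)
                 left_inv := secFun_left g v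
                 right_inv := by
                   intro u
                   have h := secFun_left g⁻¹ (g.toPerm v) u
                   rw [inv_inv] at h
                   rw [toPerm_inv] at h
                   simp only [Equiv.Perm.inv_def, Equiv.symm_apply_apply] at h
                   exact h } : Equiv.Perm (Vertex d))⁻¹) = secFun g⁻¹ (g.toPerm v) := rfl
     rw [this]
     exact LP_secFun g⁻¹ (g.toPerm v)⟩

theorem sec_apply (g : AutT d) (v u : Vertex d) :
    (sec g v).toPerm u = (g.toPerm (v ++ u)).drop v.length := rfl

end AutT

open AutT

/-- The stabilizer of the vertex `v` in `Aut T_d`. -/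
def stabT (d : ℕ) (v : Vertex d) : Subgroup (AutT d) where
  carrier := {g | g.toPerm v = v}
  one_mem' := rfl
  mul_mem' := by
    intro a b ha hb
    show (a * b).toPerm v = v
    rw [toPerm_mul, Equiv.Perm.mul_apply]
    rw [show b.toPerm v = v from hb, show a.toPerm v = v from ha]
  inv_mem' := by
    intro a ha
    show (a⁻¹).toPerm v = v
    rw [toPerm_inv]
    rw [Equiv.Perm.inv_eq_iff_eq]
    exact (show a.toPerm v = v from ha).symm

/-- The self-similarity homomorphism `π_v` from the stabilizer of `v` to `Aut T_d`,
`g ↦ g|_v`. -/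
def secHom (d : ℕ) (v : Vertex d) : (stabT d v) →* AutT d where
  toFun g := sec g.1 v
  map_one' := by
    apply Subtype.ext
    apply Equiv.ext
    intro u
    show ((1 : AutT d).toPerm (v ++ u)).drop v.length = (1 : AutT d).toPerm u
    rw [toPerm_one]
    simp [List.drop_left]
  map_mul' := by
    intro a b
    apply Subtype.ext
    apply Equiv.ext
    intro u
    have hb : (b.1).toPerm v = v := b.2
    show ((a.1 * b.1).toPerm (v ++ u)).drop v.length
        = (sec a.1 v).toPerm ((sec b.1 v).toPerm u)
    rw [toPerm_mul, Equiv.Perm.mul_apply]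
    congr 1
    congr 1
    have h := secFun_spec b.1 v u
    rw [hb] at h
    exact h

/-- The image subgroup `H^v = π_v(H_v)` of the stabilizer of `v` in `H` under the
self-similarity map. -/
def secSG (d : ℕ) (H : Subgroup (AutT d)) (v : Vertex d) : Subgroup (AutT d) :=
  (H.subgroupOf (stabT d v)).map (secHom d v)

/-- A subgroup of `Aut T_d` is self-similar if `H^v ≤ H` for every vertex `v`. -/
def IsSelfSimilar (d : ℕ) (H : Subgroup (AutT d)) : Prop :=
  ∀ v : Vertex d, secSG d H v ≤ H

/-- A subgroup of `Aut T_d` is fractal if `H^v = H` for every vertex `v`. -/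
def IsFractal (d : ℕ) (H : Subgroup (AutT d)) : Prop :=
  ∀ v : Vertex d, secSG d H v = H

end TreeDyn
namespace TreeDyn

open AutT

variable {d : ℕ}

instance : TopologicalSpace (Vertex d) := ⊥
instance : DiscreteTopology (Vertex d) := ⟨rfl⟩

/-- The profinite topology on `Aut T_d`: the topology of pointwise convergence on vertices. -/
instance : TopologicalSpace (AutT d) :=
  TopologicalSpace.induced (fun g : AutT d => (g.toPerm : Vertex d → Vertex d)) inferInstance

theorem continuous_toFun : Continuous fun g : AutT d => (g.toPerm : Vertex d → Vertex d) :=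
  continuous_induced_dom

theorem continuous_ev (x : Vertex d) : Continuous fun g : AutT d => g.toPerm x :=
  (continuous_apply x).comp continuous_toFun

instance : IsTopologicalGroup (AutT d) where
  continuous_mul := by
    apply continuous_induced_rng.2
    show Continuous fun p : AutT d × AutT d => ((p.1 * p.2).toPerm : Vertex d → Vertex d)
    apply continuous_pi
    intro x
    rw [continuous_discrete_rng]
    intro z
    have heq : ((fun p : AutT d × AutT d => (p.1 * p.2).toPerm x)) ⁻¹' {z}
        = ⋃ y : Vertex d, ((fun p : AutT d × AutT d => p.2.toPerm x) ⁻¹' {y})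
            ∩ ((fun p : AutT d × AutT d => p.1.toPerm y) ⁻¹' {z}) := by
      ext p
      simp only [Set.mem_preimage, Set.mem_singleton_iff, Set.mem_iUnion, Set.mem_inter_iff]
      constructor
      · intro h
        exact ⟨p.2.toPerm x, rfl, by rw [toPerm_mul, Equiv.Perm.mul_apply] at h; exact h⟩
      · rintro ⟨y, h1, h2⟩
        rw [toPerm_mul, Equiv.Perm.mul_apply, h1, h2]
    rw [heq]
    apply isOpen_iUnion
    intro y
    exact ((isOpen_discrete _).preimage ((continuous_ev x).comp continuous_snd)).inter
      ((isOpen_discrete _).preimage ((continuous_ev y).comp continuous_fst))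
  continuous_inv := by
    apply continuous_induced_rng.2
    show Continuous fun g : AutT d => ((g⁻¹).toPerm : Vertex d → Vertex d)
    apply continuous_pi
    intro x
    rw [continuous_discrete_rng]
    intro z
    have heq : (fun g : AutT d => (g⁻¹).toPerm x) ⁻¹' {z}
        = (fun g : AutT d => g.toPerm z) ⁻¹' {x} := by
      ext g
      simp only [Set.mem_preimage, Set.mem_singleton_iff]
      rw [toPerm_inv]
      exact Equiv.Perm.inv_eq_iff_eq.trans eq_comm
    rw [heq]
    exact (isOpen_discrete _).preimage (continuous_ev z)

end TreeDyn
namespace TreeDyn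

open AutT

/-- `J` is the self-similar closure of `H` in `G`: the smallest closed self-similar
subgroup of `G` containing `H`. -/
def IsSelfSimilarClosure (d : ℕ) (G H J : Subgroup (AutT d)) : Prop :=
  H ≤ J ∧ J ≤ G ∧ IsClosed (J : Set (AutT d)) ∧ IsSelfSimilar d J ∧
    ∀ J' : Subgroup (AutT d), H ≤ J' → J' ≤ G → IsClosed (J' : Set (AutT d)) →
      IsSelfSimilar d J' → J ≤ J'

/-- The pointwise stabilizer in `Aut T_d` of the vertices at level `m`. -/
def levelStab (d : ℕ) (m : ℕ) : Subgroup (AutT d) where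
  carrier := {g | ∀ v : Vertex d, v.length = m → g.toPerm v = v}
  one_mem' := fun _ _ => rfl
  mul_mem' := by
    intro a b ha hb v hv
    show (a * b).toPerm v = v
    rw [toPerm_mul, Equiv.Perm.mul_apply, hb v hv, ha v hv]
  inv_mem' := by
    intro a ha v hv
    show (a⁻¹).toPerm v = v
    rw [toPerm_inv, Equiv.Perm.inv_eq_iff_eq]
    exact (ha v hv).symm

/-- A topological group is pronilpotent if its quotient by every open normal subgroup
is nilpotent. -/
def Pronilpotent (G : Type*) [Group G] [TopologicalSpace G] : Prop :=
  ∀ (N : Subgroup G) [N.Normal], IsOpen (N : Set G) → Group.IsNilpotent (G ⧸ N)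

/-- A topological group is pro-`p` if its quotient by every open normal subgroup
is a `p`-group. -/
def IsProP (p : ℕ) (G : Type*) [Group G] [TopologicalSpace G] : Prop :=
  ∀ (N : Subgroup G) [N.Normal], IsOpen (N : Set G) → IsPGroup p (G ⧸ N)

/-- A topological group is prosolvable if its quotient by every open normal subgroup
is solvable. -/
def Prosolvable (G : Type*) [Group G] [TopologicalSpace G] : Prop :=
  ∀ (N : Subgroup G) [N.Normal], IsOpen (N : Set G) → IsSolvable (G ⧸ N)

/-- The Frattini subgroup of a topological group: the intersection of its
maximal open (proper) subgroups. -/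
def frattiniOpen (G : Type*) [Group G] [TopologicalSpace G] : Subgroup G :=
  sInf {M : Subgroup G | IsOpen (M : Set G) ∧ M ≠ ⊤ ∧
    ∀ M' : Subgroup G, IsOpen (M' : Set G) → M < M' → M' = ⊤}

end TreeDyn
namespace TreeDyn

open AutT

variable {d : ℕ}

/-- The cyclic successor on `Fin d`. -/
def succFin (x : Fin d) : Fin d :=
  ⟨(x.1 + 1) % d, Nat.mod_lt _ (Nat.lt_of_le_of_lt (Nat.zero_le _) x.2)⟩

/-- The cyclic predecessor on `Fin d`. -/
def predFin (x : Fin d) : Fin d :=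
  ⟨(x.1 + (d - 1)) % d, Nat.mod_lt _ (Nat.lt_of_le_of_lt (Nat.zero_le _) x.2)⟩

theorem predFin_succFin (x : Fin d) : predFin (succFin x) = x := by
  have hd : 0 < d := Nat.lt_of_le_of_lt (Nat.zero_le _) x.2
  apply Fin.ext
  show ((x.1 + 1) % d + (d - 1)) % d = x.1
  rw [Nat.mod_add_mod, show x.1 + 1 + (d - 1) = x.1 + d by omega, Nat.add_mod_right,
    Nat.mod_eq_of_lt x.2]

theorem succFin_predFin (x : Fin d) : succFin (predFin x) = x := by
  have hd : 0 < d := Nat.lt_of_le_of_lt (Nat.zero_le _) x.2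
  apply Fin.ext
  show ((x.1 + (d - 1)) % d + 1) % d = x.1
  rw [Nat.mod_add_mod, show x.1 + (d - 1) + 1 = x.1 + d by omega, Nat.add_mod_right,
    Nat.mod_eq_of_lt x.2]

theorem succFin_val_eq_zero_iff (x : Fin d) : (succFin x).1 = 0 ↔ x.1 + 1 = d := by
  show (x.1 + 1) % d = 0 ↔ x.1 + 1 = d
  by_cases h : x.1 + 1 = d
  · simp [h, Nat.mod_self]
  · rw [Nat.mod_eq_of_lt (by omega)]
    omega

theorem predFin_val_succ_eq_iff (x : Fin d) : (predFin x).1 + 1 = d ↔ x.1 = 0 := by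
  have hd : 0 < d := Nat.lt_of_le_of_lt (Nat.zero_le _) x.2
  show (x.1 + (d - 1)) % d + 1 = d ↔ x.1 = 0
  rcases Nat.eq_zero_or_pos x.1 with h | h
  · rw [h]
    simp only [Nat.zero_add]
    rw [Nat.mod_eq_of_lt (show d - 1 < d by omega)]
    simp only [iff_true, eq_self_iff_true]
    omega
  · rw [show x.1 + (d - 1) = (x.1 - 1) + d by omega, Nat.add_mod_right,
      Nat.mod_eq_of_lt (show x.1 - 1 < d by omega)]
    omega

/-- The odometer function: adds one with carrying, on words read root-first. -/
def odF (d : ℕ) : Vertex d → Vertex d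
  | [] => []
  | x :: u => succFin x :: (if x.1 + 1 = d then odF d u else u)

/-- The inverse odometer function. -/
def odG (d : ℕ) : Vertex d → Vertex d
  | [] => []
  | x :: u => predFin x :: (if x.1 = 0 then odG d u else u)

theorem odG_odF (u : Vertex d) : odG d (odF d u) = u := by
  induction u with
  | nil => rfl
  | cons x t ih =>
    simp only [odF, odG, predFin_succFin]
    by_cases h : x.1 + 1 = d
    · rw [if_pos h, if_pos ((succFin_val_eq_zero_iff x).mpr h), ih]
    · rw [if_neg h, if_neg (fun hc => h ((succFin_val_eq_zero_iff x).mp hc))]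

theorem odF_odG (u : Vertex d) : odF d (odG d u) = u := by
  induction u with
  | nil => rfl
  | cons x t ih =>
    simp only [odF, odG, succFin_predFin]
    by_cases h : x.1 = 0
    · rw [if_pos h, if_pos ((predFin_val_succ_eq_iff x).mpr h), ih]
    · rw [if_neg h, if_neg (fun hc => h ((predFin_val_succ_eq_iff x).mp hc))]

theorem odF_append (a b : Vertex d) :
    odF d (a ++ b) = odF d a ++ (if ∀ x ∈ a, x.1 + 1 = d then odF d b else b) := by
  induction a with
  | nil => simp [odF]
  | cons x t ih =>
    by_cases h : x.1 + 1 = d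
    · by_cases h2 : ∀ y ∈ t, y.1 + 1 = d
      · have hall : ∀ y ∈ x :: t, y.1 + 1 = d := by
          intro y hy
          rcases List.mem_cons.mp hy with rfl | hy
          · exact h
          · exact h2 y hy
        simp only [List.cons_append, List.append_eq, odF, if_pos h, if_pos h2, if_pos hall, ih]
      · have hall : ¬ ∀ y ∈ x :: t, y.1 + 1 = d :=
          fun hc => h2 fun y hy => hc y (List.mem_cons_of_mem x hy)
        simp only [List.cons_append, List.append_eq, odF, if_pos h, if_neg h2, if_neg hall, ih]
    · have hall : ¬ ∀ y ∈ x :: t, y.1 + 1 = d :=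
        fun hc => h (hc x (List.mem_cons_self (a := x) (l := t)))
      simp only [List.cons_append, List.append_eq, odF, if_neg h, if_neg hall]

theorem odG_append (a b : Vertex d) :
    odG d (a ++ b) = odG d a ++ (if ∀ x ∈ a, x.1 = 0 then odG d b else b) := by
  induction a with
  | nil => simp [odG]
  | cons x t ih =>
    by_cases h : x.1 = 0
    · by_cases h2 : ∀ y ∈ t, y.1 = 0
      · have hall : ∀ y ∈ x :: t, y.1 = 0 := by
          intro y hy
          rcases List.mem_cons.mp hy with rfl | hy
          · exact h
          · exact h2 y hy
        simp only [List.cons_append, List.append_eq, odG, if_pos h, if_pos h2, if_pos hall, ih]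
      · have hall : ¬ ∀ y ∈ x :: t, y.1 = 0 :=
          fun hc => h2 fun y hy => hc y (List.mem_cons_of_mem x hy)
        simp only [List.cons_append, List.append_eq, odG, if_pos h, if_neg h2, if_neg hall, ih]
    · have hall : ¬ ∀ y ∈ x :: t, y.1 = 0 :=
        fun hc => h (hc x (List.mem_cons_self (a := x) (l := t)))
      simp only [List.cons_append, List.append_eq, odG, if_neg h, if_neg hall]

theorem LP_odF : LP d (odF d) := by
  constructor
  · intro w
    induction w with
    | nil => rfl
    | cons x t ih =>
      simp only [odF]
      by_cases h : x.1 + 1 = d <;> simp [h, ih]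
  · intro v w h
    obtain ⟨t, rfl⟩ := h
    rw [odF_append]
    exact ⟨_, rfl⟩

theorem LP_odG : LP d (odG d) := by
  constructor
  · intro w
    induction w with
    | nil => rfl
    | cons x t ih =>
      simp only [odG]
      by_cases h : x.1 = 0 <;> simp [h, ih]
  · intro v w h
    obtain ⟨t, rfl⟩ := h
    rw [odG_append]
    exact ⟨_, rfl⟩

/-- The standard odometer as a permutation of the vertices. -/
def odPerm (d : ℕ) : Equiv.Perm (Vertex d) where
  toFun := odF d
  invFun := odG d
  left_inv := odG_odF
  right_inv := odF_odG

/-- The standard odometer `ω ∈ Aut T_d` (adds one to a `d`-adic digit string,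
with carrying). -/
def od (d : ℕ) : AutT d :=
  ⟨odPerm d, ⟨LP_odF, LP_odG⟩⟩

/-- The standard `d`-cycle `σ = (0 1 … d-1)` on the first level. -/
def sigmaFin (d : ℕ) : Equiv.Perm (Fin d) where
  toFun := succFin
  invFun := predFin
  left_inv := predFin_succFin
  right_inv := succFin_predFin

end TreeDyn

/-
Since `Aut T_d` is profinite, the closed subgroup `G` is compact and its open subgroup `H` has
finite index. Neither restricting to the stabilizer of `v` nor applying `π_v` increases the
index, so `[G : H^v] = [G^v : H^v] ≤ [G_v : H_v] ≤ [G : H]`.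
As `H^v ≤ H ≤ G`, the indices multiply, forcing `H^v = H`.
-/

namespace Subgroup

variable {Γ : Type*} [Group Γ]

theorem relIndex_subgroupOf_le (S : Subgroup Γ) {H K : Subgroup Γ} (hHK : H.relIndex K ≠ 0) :
    (H.subgroupOf S).relIndex (K.subgroupOf S) ≤ H.relIndex K := by
  rw [subgroupOf, relIndex_comap, subgroupOf_map_subtype]
  exact relIndex_le_of_le_right inf_le_left hHK

theorem eq_of_le_of_relIndex_le {P H K : Subgroup Γ} (hPH : P ≤ H) (hHK : H ≤ K)
    (hP : P.relIndex K ≠ 0) (hle : P.relIndex K ≤ H.relIndex K) : P = H := by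
  have hH : 0 < H.relIndex K := Nat.pos_of_ne_zero (mt (relIndex_eq_zero_of_le_left hPH) hP)
  have hmul := relIndex_mul_relIndex P H K hPH hHK
  have hPH1 : P.relIndex H ≤ 1 :=
    Nat.le_of_mul_le_mul_right (by rwa [one_mul, hmul]) hH
  have hPH0 : P.relIndex H ≠ 0 := fun h0 => hP (by rw [← hmul, h0, zero_mul])
  exact le_antisymm hPH (relIndex_eq_one.mp (by omega))

theorem map_subgroupOf_eq_of_relIndex_ne_zero {S : Subgroup Γ} (f : S →* Γ) {H K : Subgroup Γ}
    (hHK : H ≤ K) (hH : H.relIndex K ≠ 0) (hHf : (H.subgroupOf S).map f ≤ H)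
    (hKf : (K.subgroupOf S).map f = K) : (H.subgroupOf S).map f = H := by
  have hHS : (H.subgroupOf S).relIndex (K.subgroupOf S) ≠ 0 :=
    relIndex_comap_ne_zero S.subtype hH
  have hdvd :
      ((H.subgroupOf S).map f).relIndex K ∣ (H.subgroupOf S).relIndex (K.subgroupOf S) := by
    simpa only [relIndex_comap, hKf] using
      relIndex_dvd_of_le_left (K.subgroupOf S) (le_comap_map f (H.subgroupOf S))
  refine eq_of_le_of_relIndex_le hHf hHK (ne_zero_of_dvd_ne_zero hHS hdvd) ?_
  exact (Nat.le_of_dvd (Nat.pos_of_ne_zero hHS) hdvd).trans (relIndex_subgroupOf_le S hH)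

theorem relIndex_ne_zero_of_isOpen [TopologicalSpace Γ] [IsTopologicalGroup Γ] [CompactSpace Γ]
    {H K : Subgroup Γ} (hK : IsClosed (K : Set Γ))
    (hH : IsOpen (H.subgroupOf K : Set K)) : H.relIndex K ≠ 0 := by
  have : CompactSpace K := isCompact_iff_compactSpace.mp hK.isCompact
  have := quotient_finite_of_isOpen _ hH
  exact index_ne_zero_of_finite

end Subgroup

theorem isClosed_setOf_leftInverse {α β : Type*} [TopologicalSpace α] [DiscreteTopology α]
    [TopologicalSpace β] [DiscreteTopology β] :
    IsClosed {p : (α → β) × (β → α) | Function.LeftInverse p.1 p.2} := by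
  have : {p : (α → β) × (β → α) | Function.LeftInverse p.1 p.2} =
      ⋂ x, ⋂ y, (fun p : (α → β) × (β → α) => (p.2 x, p.1 y)) ⁻¹'
        {q | q.1 = y → q.2 = x} := by
    ext p
    simp [Function.LeftInverse]
  rw [this]
  exact isClosed_iInter fun x => isClosed_iInter fun y =>
    (isClosed_discrete _).preimage (by fun_prop)

namespace TreeDyn

variable {d : ℕ}

theorem isCompact_setOf_LP : IsCompact {f : Vertex d → Vertex d | LP d f} := by
  have hclosed : IsClosed {f : Vertex d → Vertex d | LP d f} := by
    have : {f : Vertex d → Vertex d | LP d f} =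
        (⋂ w, (fun f : Vertex d → Vertex d => f w) ⁻¹' {u | u.length = w.length}) ∩
          ⋂ v, ⋂ w, (fun f : Vertex d → Vertex d => (f v, f w)) ⁻¹'
            {p | v <+: w → p.1 <+: p.2} := by
      ext f
      simp [LP]
    rw [this]
    exact (isClosed_iInter fun w => (isClosed_discrete _).preimage (by fun_prop)).inter
      (isClosed_iInter fun v => isClosed_iInter fun w =>
        (isClosed_discrete _).preimage (by fun_prop))
  refine (isCompact_univ_pi (s := fun w : Vertex d => {u : Vertex d | u.length = w.length})
    fun w => (List.finite_length_eq (Fin d) w.length).isCompact).of_isClosed_subset hclosed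
    fun f hf => Set.mem_univ_pi.mpr hf.1

/-- Recording `g⁻¹` next to `g` makes the image closed: bijectivity becomes the pointwise
condition that the two components are mutually inverse. -/
def toFunPair (g : AutT d) : (Vertex d → Vertex d) × (Vertex d → Vertex d) :=
  (g.toPerm, g⁻¹.toPerm)

theorem range_toFunPair : Set.range (toFunPair (d := d)) =
    ({f | LP d f} ×ˢ {f | LP d f}) ∩
      ({p | Function.LeftInverse p.1 p.2} ∩ {p | Function.LeftInverse p.2 p.1}) := by
  ext p
  constructor
  · rintro ⟨g, rfl⟩
    exact ⟨⟨g.2.1, g.2.2⟩, g.toPerm.apply_symm_apply, g.toPerm.symm_apply_apply⟩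
  · rintro ⟨⟨h1, h2⟩, hl, hr⟩
    exact ⟨⟨⟨p.1, p.2, hr, hl⟩, h1, h2⟩, rfl⟩

theorem isEmbedding_toFunPair : Topology.IsEmbedding (toFunPair (d := d)) := by
  refine ⟨.of_comp ?_ continuous_fst ⟨rfl⟩, fun g h hgh => ?_⟩
  · exact continuous_toFun.prodMk (continuous_toFun.comp continuous_inv)
  · exact Subtype.ext (Equiv.coe_fn_injective (congrArg Prod.fst hgh))

instance : CompactSpace (AutT d) := by
  refine ⟨isEmbedding_toFunPair.isCompact_iff.mpr ?_⟩
  rw [Set.image_univ, range_toFunPair]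
  exact (isCompact_setOf_LP.prod isCompact_setOf_LP).inter_right
    (isClosed_setOf_leftInverse.inter (isClosed_setOf_leftInverse.preimage continuous_swap))

theorem open_selfSimilar_subgroup_isFractal_general (d : ℕ)
    (G : Subgroup (AutT d)) (hGclosed : IsClosed (G : Set (AutT d)))
    (hGfractal : IsFractal d G)
    (H : Subgroup (AutT d)) (hHG : H ≤ G)
    (hHopen : IsOpen ((H.subgroupOf G) : Set G))
    (hHss : IsSelfSimilar d H) :
    IsFractal d H := fun v =>
  Subgroup.map_subgroupOf_eq_of_relIndex_ne_zero (secHom d v) hHG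
    (Subgroup.relIndex_ne_zero_of_isOpen hGclosed hHopen) (hHss v) (hGfractal v)

/-- **Open self-similar subgroups of closed fractal groups are fractal.**
Let `d ≥ 2`, let `G` be a closed fractal subgroup of `Aut T_d`, and let `H` be an open
self-similar subgroup of `G`.  Then `H` is itself fractal: `π_v(H_v) = H` for every
vertex `v`. -/
theorem open_selfSimilar_subgroup_isFractal (d : ℕ) (hd : 2 ≤ d)
    (G : Subgroup (AutT d)) (hGclosed : IsClosed (G : Set (AutT d)))
    (hGfractal : IsFractal d G)
    (H : Subgroup (AutT d)) (hHG : H ≤ G)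
    (hHopen : IsOpen ((H.subgroupOf G) : Set G))
    (hHss : IsSelfSimilar d H) :
    IsFractal d H :=
  open_selfSimilar_subgroup_isFractal_general d G hGclosed hGfractal H hHG hHopen hHss

end TreeDyn
end

section
/- Let K be a field, d a positive integer, and ζ ∈ K with ζ^{d−1} = 1. Let φ : K(x) → K(x) be the unique K-algebra field homomorphism of the rational function field with φ(x) = x + x⁻¹. If f ∈ K(x) satisfies φ(f) = x^d + ζ·x^{−d} (that is, f(x + 1/x) = x^d + ζ/x^d), then f is a polynomial: f lies in the image of K[x] under the canonical embedding into K(x). -/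
/-!
The involution `X ↦ X⁻¹` of `K(X)` fixes `X + X⁻¹`, hence fixes the image of `φ`. Applied to
`X^d + ζ X^{-d}` it gives `X^{-d} + ζ X^d`, which forces `ζ = 1`. Then the Dickson polynomial
`D_d(x, 1)`, characterised by `D_d(x + x⁻¹, 1) = x^d + x^{-d}`, has the same image as `f` under
the injective map `φ`.
-/

open Polynomial

theorem eq_one_of_inv_add_mul_eq_add_mul_inv {F : Type*} [Field F] {t c : F} (ht : t ≠ t⁻¹)
    (h : t⁻¹ + c * t = t + c * t⁻¹) : c = 1 := by
  have : (c - 1) * (t - t⁻¹) = 0 := by linear_combination h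
  simpa [sub_eq_zero, ht] using this

theorem Polynomial.aeval_dickson_one_one_add_inv {R A : Type*} [CommRing R] [CommRing A]
    [Algebra R A] {x y : A} (h : x * y = 1) (n : ℕ) :
    aeval (x + y) (dickson 1 (1 : R) n) = x ^ n + y ^ n := by
  rw [aeval_def, ← eval_map, map_dickson, map_one, dickson_one_one_eval_add_inv x y h]

namespace RatFunc

variable {K : Type*} [Field K]

theorem algHom_ext {B : Type*} [Semiring B] [Algebra K B] {ψ₁ ψ₂ : RatFunc K →ₐ[K] B}
    (h : ψ₁ X = ψ₂ X) : ψ₁ = ψ₂ :=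
  IsLocalization.algHom_ext (nonZeroDivisors K[X]) (Polynomial.algHom_ext h)

theorem algHom_algebraMap {L : Type*} [CommRing L] [Algebra K L] (ψ : RatFunc K →ₐ[K] L)
    (p : K[X]) : ψ (algebraMap K[X] (RatFunc K) p) = aeval (ψ X) p := by
  rw [← aeval_X_left_eq_algebraMap, aeval_algHom_apply]

theorem transcendental_X_inv : Transcendental K (X⁻¹ : RatFunc K) :=
  fun h ↦ transcendental_X (IsAlgebraic.inv_iff.mp h)

theorem exists_algHom_X_eq_inv : ∃ σ : RatFunc K →ₐ[K] RatFunc K, σ X = X⁻¹ :=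
  ⟨(IntermediateField.val _).comp (algEquivOfTranscendental _ transcendental_X_inv).toAlgHom,
    by simp⟩

theorem X_pow_ne_inv_X_pow {d : ℕ} (hd : 0 < d) : (X : RatFunc K) ^ d ≠ (X ^ d)⁻¹ := by
  intro h
  have := congrArg intDegree h
  rw [intDegree_inv, ← algebraMap_X, ← map_pow, intDegree_polynomial, natDegree_X_pow] at this
  omega

theorem eq_one_of_X_pow_add_C_mul_inv_mem_range {φ : RatFunc K →ₐ[K] RatFunc K}
    (hφ : φ X = X + X⁻¹) {d : ℕ} (hd : 0 < d) {ζ : K}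
    (h : X ^ d + C ζ * (X ^ d)⁻¹ ∈ Set.range φ) : ζ = 1 := by
  obtain ⟨f, hf⟩ := h
  obtain ⟨σ, hσ⟩ := exists_algHom_X_eq_inv (K := K)
  have hσφ : σ.comp φ = φ := algHom_ext (by simp [hφ, hσ, add_comm])
  have hfix : σ (X ^ d + C ζ * (X ^ d)⁻¹) = X ^ d + C ζ * (X ^ d)⁻¹ := by
    rw [← hf, ← AlgHom.comp_apply, hσφ]
  have hσC : σ (C ζ) = C ζ := by rw [← algebraMap_eq_C]; exact σ.commutes ζ
  rw [map_add, map_mul, map_inv₀, map_pow, hσ, hσC, inv_pow, inv_inv] at hfix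
  have hC : C ζ = 1 := eq_one_of_inv_add_mul_eq_add_mul_inv (X_pow_ne_inv_X_pow hd) hfix
  exact C.injective (by rw [hC, map_one])

end RatFunc

theorem twisted_chebyshev_is_polynomial_general (K : Type) [Field K] (d : ℕ) (hd : 0 < d)
    (ζ : K)
    (φ : RatFunc K →ₐ[K] RatFunc K) (hφ : φ RatFunc.X = RatFunc.X + RatFunc.X⁻¹)
    (f : RatFunc K) (hf : φ f = RatFunc.X ^ d + RatFunc.C ζ * (RatFunc.X ^ d)⁻¹) :
    f ∈ Set.range (algebraMap (Polynomial K) (RatFunc K)) := by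
  obtain rfl : ζ = 1 := RatFunc.eq_one_of_X_pow_add_C_mul_inv_mem_range hφ hd ⟨f, hf⟩
  have hX : (RatFunc.X : RatFunc K) * RatFunc.X⁻¹ = 1 := mul_inv_cancel₀ RatFunc.X_ne_zero
  refine ⟨dickson 1 1 d, RingHom.injective (φ : RatFunc K →+* RatFunc K) ?_⟩
  simp [RatFunc.algHom_algebraMap, hφ, hf, aeval_dickson_one_one_add_inv hX]

/-- **Standard twisted Chebyshev maps are polynomials.**
Let `K` be a field, `d` a positive integer, and `ζ ∈ K` with `ζ^(d-1) = 1`.  Let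
`φ : K(x) → K(x)` be the (unique) `K`-algebra homomorphism of the rational function field
with `φ(x) = x + x⁻¹`.  If `f ∈ K(x)` satisfies `φ(f) = x^d + ζ·x^(-d)`, i.e.
`f(x + 1/x) = x^d + ζ/x^d`, then `f` is a polynomial: it lies in the image of `K[x]`
under the canonical embedding into `K(x)`. -/
theorem twisted_chebyshev_is_polynomial (K : Type) [Field K] (d : ℕ) (hd : 0 < d)
    (ζ : K) (hζ : ζ ^ (d - 1) = 1)
    (φ : RatFunc K →ₐ[K] RatFunc K) (hφ : φ RatFunc.X = RatFunc.X + RatFunc.X⁻¹)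
    (f : RatFunc K) (hf : φ f = RatFunc.X ^ d + RatFunc.C ζ * (RatFunc.X ^ d)⁻¹) :
    f ∈ Set.range (algebraMap (Polynomial K) (RatFunc K)) :=
  twisted_chebyshev_is_polynomial_general K d hd ζ φ hφ f hf
end

section
/- Let d ≥ 2 and let G be a closed fractal subgroup of Aut T_d. If H is a closed subgroup of G contained in the center Z(G), then the self-similar closure of H in G is also contained in Z(G). -/
open scoped Pointwise

/-!
`G ⊓ centralizer G` is closed, since `Aut T_d` is Hausdorff, and contains `H`. It is also
self-similar: sections at `v` are a homomorphism on the stabilizer of `v`, so they carry an element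
commuting with `G` to one commuting with `G^v`, and `G^v = G` by fractality. Minimality of the
self-similar closure then puts it inside this centralizer.
-/

namespace TreeDyn

open AutT

variable {d : ℕ}

theorem isEmbedding_toFun :
    Topology.IsEmbedding fun g : AutT d => (g.toPerm : Vertex d → Vertex d) :=
  ⟨⟨rfl⟩, fun _ _ h => Subtype.ext (Equiv.coe_fn_injective h)⟩

instance : T2Space (AutT d) := isEmbedding_toFun.t2Space

theorem secSG_mono {K L : Subgroup (AutT d)} (hKL : K ≤ L) (v : Vertex d) :
    secSG d K v ≤ secSG d L v :=
  Subgroup.map_mono (Subgroup.subgroupOf_mono _ hKL)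

theorem secSG_centralizer_le (G : Subgroup (AutT d)) (v : Vertex d) :
    secSG d (Subgroup.centralizer G) v ≤ Subgroup.centralizer (secSG d G v) := by
  rintro _ ⟨j, hj, rfl⟩ _ ⟨k, hk, rfl⟩
  rw [← map_mul, ← map_mul]
  exact congrArg (secHom d v) (Subtype.ext (hj k hk))

theorem IsFractal.isSelfSimilar_inf_centralizer {G : Subgroup (AutT d)} (hG : IsFractal d G) :
    IsSelfSimilar d (G ⊓ Subgroup.centralizer G) := fun v =>
  le_inf ((secSG_mono inf_le_left v).trans (hG v).le)
    ((secSG_mono inf_le_right v).trans ((secSG_centralizer_le G v).trans_eq (by rw [hG v])))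

theorem center_selfSimilarClosure_general (d : ℕ)
    (G : Subgroup (AutT d)) (hGclosed : IsClosed (G : Set (AutT d)))
    (hGfractal : IsFractal d G)
    (H : Subgroup (AutT d)) (hHG : H ≤ G)
    (hHcentral : ∀ h ∈ H, ∀ g ∈ G, h * g = g * h) :
    ∀ J : Subgroup (AutT d), IsSelfSimilarClosure d G H J →
      ∀ j ∈ J, ∀ g ∈ G, j * g = g * j := by
  intro J hJ j hj g hg
  have hHZ : H ≤ G ⊓ Subgroup.centralizer G :=
    le_inf hHG fun h hh g hg => (hHcentral h hh g hg).symm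
  have hZclosed : IsClosed ((G ⊓ Subgroup.centralizer G : Subgroup (AutT d)) : Set (AutT d)) :=
    hGclosed.inter (Set.isClosed_centralizer _)
  have hJZ : J ≤ G ⊓ Subgroup.centralizer G :=
    hJ.2.2.2.2 _ hHZ inf_le_left hZclosed hGfractal.isSelfSimilar_inf_centralizer
  exact ((hJZ hj).2 g hg).symm

/-- **Central subgroups are self-similarity-closed in fractal groups.**
Let `d ≥ 2` and let `G` be a closed fractal subgroup of `Aut T_d`.  If `H` is a closed
subgroup of `G` contained in the center `Z(G)`, then the self-similar closure of `H` in
`G` is also contained in `Z(G)`. -/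
theorem center_selfSimilarClosure (d : ℕ) (hd : 2 ≤ d)
    (G : Subgroup (AutT d)) (hGclosed : IsClosed (G : Set (AutT d)))
    (hGfractal : IsFractal d G)
    (H : Subgroup (AutT d)) (hHG : H ≤ G) (hHclosed : IsClosed (H : Set (AutT d)))
    (hHcentral : ∀ h ∈ H, ∀ g ∈ G, h * g = g * h) :
    ∀ J : Subgroup (AutT d), IsSelfSimilarClosure d G H J →
      ∀ j ∈ J, ∀ g ∈ G, j * g = g * j :=
  center_selfSimilarClosure_general d G hGclosed hGfractal H hHG hHcentral

end TreeDyn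
end

section
/- For every positive integer n, the Frattini subgroup of the dihedral group D_n of order 2n equals the cyclic subgroup generated by r^{rad(n)}, where r is the rotation of order n and rad(n) is the radical of n (the product of the distinct prime divisors of n, with rad(1) = 1); consequently, the index of the Frattini subgroup in D_n is 2·rad(n). -/
/-!
The rotation subgroup `⟨r⟩` is maximal, and so is, for every prime `p ∣ n`, the preimage of a
reflection subgroup `⟨s⟩` of `D_p` under the reduction `D_n → D_p`: a strictly larger subgroup
contains a reflection and a rotation that generates `⟨r⟩`. An element lying in all of these
is a rotation `r^a` with `rad n ∣ a`. Conversely, `r^(rad n)` is a non-generator: if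
`K ⊔ ⟨r^(rad n)⟩ = D_n`, then `K` maps onto `D_(rad n)`, so `K` contains a reflection and a
rotation `r^a` with `a ≡ 1 mod rad n`; such an `a` is prime to `n`, so `r ∈ K` and `K = D_n`.
-/

/-- The radical of a positive integer `n`: the product of the distinct primes dividing `n`
(the empty product `1` when `n = 1`). -/
def radN (n : ℕ) : ℕ := n.primeFactors.prod id

theorem radN_dvd_iff {n a : ℕ} : radN n ∣ a ↔ ∀ p ∈ n.primeFactors, p ∣ a :=
  ⟨fun h _ hp => (Finset.dvd_prod_of_mem id hp).trans h,
    Finset.prod_primes_dvd a fun _ hp => (Nat.prime_of_mem_primeFactors hp).prime⟩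

theorem radN_dvd (n : ℕ) : radN n ∣ n :=
  radN_dvd_iff.2 fun _ => Nat.dvd_of_mem_primeFactors

theorem Nat.Coprime.of_coprime_radN {n a : ℕ} (hn : n ≠ 0) (h : a.Coprime (radN n)) :
    a.Coprime n :=
  Nat.coprime_of_dvd fun p hp hpa hpn =>
    hp.not_dvd_one (h ▸ Nat.dvd_gcd hpa (radN_dvd_iff.1 dvd_rfl p
      (Nat.mem_primeFactors.2 ⟨hp, hpn, hn⟩)))

theorem ZMod.isUnit_of_isUnit_castHom_radN {n : ℕ} [NeZero n] {a : ZMod n}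
    (h : IsUnit (ZMod.castHom (radN_dvd n) (ZMod (radN n)) a)) : IsUnit a := by
  rw [← ZMod.natCast_zmod_val a, map_natCast, ZMod.isUnit_iff_coprime] at h
  rw [← ZMod.natCast_zmod_val a, ZMod.isUnit_iff_coprime]
  exact h.of_coprime_radN (NeZero.ne n)

namespace DihedralGroup

open Subgroup

variable {n m : ℕ}

def castHom (h : m ∣ n) : DihedralGroup n →* DihedralGroup m where
  toFun
    | r a => r (ZMod.castHom h (ZMod m) a)
    | sr a => sr (ZMod.castHom h (ZMod m) a)
  map_one' := congrArg r (map_zero _)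
  map_mul' := by
    rintro (a | a) (b | b) <;> simp only [r_mul_r, r_mul_sr, sr_mul_r, sr_mul_sr, map_add, map_sub]

@[simp] theorem castHom_r (h : m ∣ n) (a : ZMod n) :
    castHom h (r a) = r (ZMod.castHom h (ZMod m) a) := rfl

@[simp] theorem castHom_sr (h : m ∣ n) (a : ZMod n) :
    castHom h (sr a) = sr (ZMod.castHom h (ZMod m) a) := rfl

theorem castHom_surjective (h : m ∣ n) : Function.Surjective (castHom h) := by
  rintro (b | b) <;>
    obtain ⟨a, rfl⟩ := ZMod.castHom_surjective h b
  exacts [⟨r a, rfl⟩, ⟨sr a, rfl⟩]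

theorem r_mem_zpowers_r_one (a : ZMod n) : r a ∈ zpowers (r 1) :=
  mem_zpowers_iff.2 ⟨a.cast, by rw [r_one_zpow, ZMod.intCast_zmod_cast]⟩

theorem sr_notMem_zpowers_r (a b : ZMod n) : sr b ∉ zpowers (r a) := by
  rintro ⟨k, hk⟩
  simp [r_zpow] at hk

theorem r_mem_zpowers_sr_iff {a i : ZMod n} : r a ∈ zpowers (sr i) ↔ a = 0 := by
  have hfin : IsOfFinOrder (sr i) := isOfFinOrder_iff_pow_eq_one.2 ⟨2, two_pos, by simp [sq]⟩
  rw [hfin.mem_zpowers_iff_mem_range_orderOf, orderOf_sr]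
  simp [Finset.range_add_one, one_def, -r_zero]

theorem r_one_mem_zpowers_r_of_isUnit {a : ZMod n} (ha : IsUnit a) : r 1 ∈ zpowers (r a) := by
  obtain ⟨b, hab⟩ := ha.exists_right_inv
  exact mem_zpowers_iff.2 ⟨b.cast, by rw [r_zpow, ZMod.intCast_zmod_cast, hab]⟩

theorem eq_top_of_r_one_mem_of_sr_mem {K : Subgroup (DihedralGroup n)} {i : ZMod n}
    (h1 : r 1 ∈ K) (hi : sr i ∈ K) : K = ⊤ := by
  have hR : zpowers (r 1) ≤ K := zpowers_le.2 h1
  refine eq_top_iff.2 fun x _ => ?_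
  rcases x with a | a
  · exact hR (r_mem_zpowers_r_one a)
  · simpa using K.mul_mem hi (hR (r_mem_zpowers_r_one (a - i)))

theorem isCoatom_zpowers_r_one : IsCoatom (zpowers (r 1 : DihedralGroup n)) := by
  refine ⟨fun h => sr_notMem_zpowers_r 1 0 (h ▸ mem_top _), fun K hK => ?_⟩
  obtain ⟨x, hxK, hx⟩ := SetLike.exists_of_lt hK
  rcases x with a | i
  · exact absurd (r_mem_zpowers_r_one a) hx
  · exact eq_top_of_r_one_mem_of_sr_mem (hK.le (mem_zpowers _)) hxK

theorem isCoatom_zpowers_sr {p : ℕ} [Fact p.Prime] (i : ZMod p) :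
    IsCoatom (zpowers (sr i : DihedralGroup p)) := by
  refine ⟨fun h => one_ne_zero (r_mem_zpowers_sr_iff.1 (h ▸ mem_top (r 1))), fun K hK => ?_⟩
  have hi : sr i ∈ K := hK.le (mem_zpowers _)
  obtain ⟨a, haK, ha⟩ : ∃ a : ZMod p, r a ∈ K ∧ a ≠ 0 := by
    obtain ⟨x, hxK, hx⟩ := SetLike.exists_of_lt hK
    rcases x with a | b
    · exact ⟨a, hxK, mt r_mem_zpowers_sr_iff.2 hx⟩
    · refine ⟨b - i, sr_mul_sr i b ▸ K.mul_mem hi hxK, sub_ne_zero.2 ?_⟩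
      rintro rfl
      exact hx (mem_zpowers _)
  exact eq_top_of_r_one_mem_of_sr_mem
    (zpowers_le.2 haK (r_one_mem_zpowers_r_of_isUnit ha.isUnit)) hi

theorem isCoatom_comap_castHom_zpowers_sr {p : ℕ} (hp : p.Prime) (h : p ∣ n) (i : ZMod p) :
    IsCoatom ((zpowers (sr i)).comap (castHom h)) :=
  haveI := Fact.mk hp
  isCoatom_comap_of_surjective (castHom_surjective h) (isCoatom_zpowers_sr i)

theorem index_zpowers_r_natCast [NeZero n] {k : ℕ} (hk : k ∣ n) :
    (zpowers (r (k : ZMod n))).index = 2 * k := by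
  have hk0 : k ≠ 0 := ne_zero_of_dvd_ne_zero (NeZero.ne n) hk
  have hcard : Nat.card (zpowers (r (k : ZMod n))) = n / k := by
    rw [Nat.card_zpowers, ← r_one_pow, orderOf_pow_of_dvd hk0 (orderOf_r_one ▸ hk),
      orderOf_r_one]
  have h := card_mul_index (zpowers (r (k : ZMod n)))
  rw [hcard, nat_card] at h
  have h2k : n / k * (2 * k) = 2 * n := by rw [mul_left_comm, Nat.div_mul_cancel hk]
  exact Nat.eq_of_mul_eq_mul_left (Nat.div_pos (Nat.le_of_dvd (NeZero.pos n) hk)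
    (Nat.pos_of_ne_zero hk0)) (h.trans h2k.symm)

theorem frattini_le_zpowers_r_radN [NeZero n] :
    frattini (DihedralGroup n) ≤ zpowers (r (radN n : ZMod n)) := by
  rintro (a | i) hx
  · have hdvd : radN n ∣ a.val := radN_dvd_iff.2 fun p hp => by
      have hM := frattini_le_coatom (isCoatom_comap_castHom_zpowers_sr
        (Nat.prime_of_mem_primeFactors hp) (Nat.dvd_of_mem_primeFactors hp) 0) hx
      rwa [mem_comap, castHom_r, r_mem_zpowers_sr_iff, ZMod.castHom_apply, ZMod.cast_eq_val,
        ZMod.natCast_eq_zero_iff] at hM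
    obtain ⟨q, hq⟩ := hdvd
    refine mem_zpowers_iff.2 ⟨q, ?_⟩
    rw [zpow_natCast, r_pow, ← Nat.cast_mul, ← hq, ZMod.natCast_zmod_val]
  · exact absurd (frattini_le_coatom isCoatom_zpowers_r_one hx) (sr_notMem_zpowers_r 1 i)

theorem eq_top_of_sup_zpowers_r_radN_eq_top [NeZero n] {K : Subgroup (DihedralGroup n)}
    (hK : K ⊔ zpowers (r (radN n : ZMod n)) = ⊤) : K = ⊤ := by
  have hmap : K.map (castHom (radN_dvd n)) = ⊤ := by
    rw [← map_top_of_surjective _ (castHom_surjective _), ← hK, Subgroup.map_sup,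
      (Subgroup.map_eq_bot_iff _).2 (zpowers_le.2 ?_), sup_bot_eq]
    rw [MonoidHom.mem_ker, castHom_r, map_natCast, ZMod.natCast_self, r_zero]
  obtain ⟨a | _, haK, ha⟩ := hmap ▸ mem_top (r 1)
  · obtain ⟨_ | b, hbK, hb⟩ := hmap ▸ mem_top (sr 0)
    · simp at hb
    have hunit : IsUnit a := ZMod.isUnit_of_isUnit_castHom_radN (r.inj ha ▸ isUnit_one)
    exact eq_top_of_r_one_mem_of_sr_mem (zpowers_le.2 haK (r_one_mem_zpowers_r_of_isUnit hunit)) hbK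
  · simp at ha

theorem zpowers_r_radN_le_frattini [NeZero n] :
    zpowers (r (radN n : ZMod n)) ≤ frattini (DihedralGroup n) := by
  refine le_iInf₂ fun M hM => zpowers_le.2 ?_
  by_contra h
  exact hM.1 (eq_top_of_sup_zpowers_r_radN_eq_top (hM.2 _ (left_lt_sup.2 (mt zpowers_le.1 h))))

end DihedralGroup

/-- **The Frattini subgroup of the dihedral group.**
For every positive integer `n`, the Frattini subgroup of the dihedral group `D_n` of order
`2n` equals the cyclic subgroup generated by `r^(rad n)`, where `r` is the rotation of order
`n`; consequently its index in `D_n` is `2·rad(n)`. -/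
theorem frattini_dihedralGroup (n : ℕ) (hn : 0 < n) :
    frattini (DihedralGroup n) = Subgroup.zpowers (DihedralGroup.r (radN n : ZMod n)) ∧
      (frattini (DihedralGroup n)).index = 2 * radN n := by
  have : NeZero n := ⟨hn.ne'⟩
  have h : frattini (DihedralGroup n) = Subgroup.zpowers (DihedralGroup.r (radN n : ZMod n)) :=
    le_antisymm DihedralGroup.frattini_le_zpowers_r_radN DihedralGroup.zpowers_r_radN_le_frattini
  exact ⟨h, h ▸ DihedralGroup.index_zpowers_r_natCast (n := n) (radN_dvd n)⟩
end
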